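/- arXiv:1001.2283 — 3 statements merged into one kernel-verified Lean document; each statement's English description precedes it below -/
import Mathlib

section
/- Let M ≥ 1, let a < b be extended reals, let Ψ_1, …, Ψ_M, Φ_1, …, Φ_M : (a,b) → ℝ and ξ : (a,b) → ℝ be measurable functions such that each product Ψ_i·Φ_j·ξ is integrable on (a,b) and such that the integrand below is integrable on the ordered domain. Then ∫_{b ≥ x_1 ≥ x_2 ≥ … ≥ x_M ≥ a} det[Ψ_i(x_j)]_{i,j=1}^{M} · det[Φ_i(x_j)]_{i,j=1}^{M} · ∏_{m=1}^{M} ξ(x_m) dx_1…dx_M = det[ ∫_a^b Ψ_i(x) Φ_j(x) ξ(x) dx ]_{i,j=1}^{M}. (Chiani–Win–Zanella / Andréief integration identity.) -/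
/-!
Expanding `det[∫ Ψ_i Φ_j ξ]` by the Leibniz formula and applying Fubini to each term, it equals
the integral over `S^M` of `G x = det[Ψ_i(x_j) Φ_j(x_j) ξ(x_j)]`. Lebesgue measure has no atoms,
so almost every point of `S^M` has distinct coordinates and lies in exactly one chamber
`{x | x ∘ σ antitone}`; pulling every chamber back to the ordered simplex gives
`∫ G = ∫_simplex ∑_σ G (x ∘ σ)`. Permuting the columns of `[Ψ_i(x_j)]` multiplies its determinant
by `sign σ`, so `∑_σ G (x ∘ σ) = det[Ψ_i(x_j)] · det[Φ_i(x_j)] · ∏ ξ(x_m)`.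
-/

open MeasureTheory Matrix

section Determinant

variable {n α R : Type*} [Fintype n] [DecidableEq n] [CommRing R]

theorem Matrix.det_of_comp_perm (ψ : n → α → R) (x : n → α) (σ : Equiv.Perm n) :
    det (of fun i j => ψ i (x (σ j))) = Equiv.Perm.sign σ * det (of fun i j => ψ i (x j)) :=
  det_permute' σ (of fun i j => ψ i (x j))

theorem Matrix.sum_perm_det_of_comp_perm_mul (ψ φ : n → α → R) (x : n → α) :
    ∑ σ : Equiv.Perm n, det (of fun i j => ψ i (x (σ j)) * φ j (x (σ j)))
      = det (of fun i j => ψ i (x j)) * det (of fun i j => φ i (x j)) := by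
  have hcol (σ : Equiv.Perm n) : det (of fun i j => ψ i (x (σ j)) * φ j (x (σ j)))
      = det (of fun i j => ψ i (x j)) * (Equiv.Perm.sign σ * ∏ j, φ j (x (σ j))) := by
    calc det (of fun i j => ψ i (x (σ j)) * φ j (x (σ j)))
        = (∏ j, φ j (x (σ j))) * det (of fun i j => ψ i (x (σ j))) := by
          rw [← det_mul_row]
          congr 1
          ext i j
          simp [mul_comm]
      _ = _ := by rw [det_of_comp_perm]; ring
  rw [← det_transpose (of fun i j => φ i (x j)), det_apply' (of fun i j => φ i (x j))ᵀ,
    Finset.mul_sum]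
  exact Finset.sum_congr rfl fun σ _ => hcol σ

end Determinant

section Integral

variable {n α 𝕜 : Type*} [Fintype n] [DecidableEq n] [RCLike 𝕜] [MeasurableSpace α]
  {μ : Measure α} [SigmaFinite μ] {f : n → n → α → 𝕜}

theorem integrable_det_of_apply (hf : ∀ i j, Integrable (f i j) μ) :
    Integrable (fun x : n → α => det (of fun i j => f i j (x j))) (Measure.pi fun _ => μ) := by
  simp_rw [det_apply', of_apply]
  exact integrable_finsetSum _ fun σ _ =>
    (Integrable.fintype_prod fun j => hf (σ j) j).const_mul _

theorem det_integral_eq_integral_det_of_apply (hf : ∀ i j, Integrable (f i j) μ) :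
    det (of fun i j => ∫ t, f i j t ∂μ)
      = ∫ x : n → α, det (of fun i j => f i j (x j)) ∂(Measure.pi fun _ => μ) := by
  simp_rw [det_apply', of_apply]
  rw [integral_finsetSum _ fun σ _ =>
    (Integrable.fintype_prod fun j => hf (σ j) j).const_mul _]
  refine Finset.sum_congr rfl fun σ _ => ?_
  rw [integral_const_mul, integral_fintype_prod_eq_prod (fun j => f (σ j) j)]

end Integral

section Diagonal

variable {ι α : Type*} [Fintype ι] [MeasurableSpace α] [MeasurableEq α]
  (μ : Measure α) [SigmaFinite μ] [NullSingletonClass μ]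

-- Split off the coordinate `i`: every slice with the other coordinates fixed is a hyperplane.
theorem measure_pi_setOf_apply_eq_apply {i j : ι} (hij : i ≠ j) :
    Measure.pi (fun _ : ι => μ) {x | x i = x j} = 0 := by
  classical
  let t : Set (({k // k ≠ i} → α) × ({k // ¬k ≠ i} → α)) :=
    {p | p.2 ⟨i, not_not.2 rfl⟩ = p.1 ⟨j, hij.symm⟩}
  have ht : MeasurableSet t := measurableSet_eq_fun (by fun_prop) (by fun_prop)
  have he : {x : ι → α | x i = x j}
      = MeasurableEquiv.piEquivPiSubtypeProd (fun _ : ι => α) (· ≠ i) ⁻¹' t := rfl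
  rw [he, (measurePreserving_piEquivPiSubtypeProd (fun _ => μ) (· ≠ i)).measure_preimage
    ht.nullMeasurableSet, Measure.measure_prod_null ht]
  exact Filter.Eventually.of_forall fun u => Measure.pi_hyperplane _ _ _

theorem ae_injective_pi : ∀ᵐ x ∂(Measure.pi fun _ : ι => μ), Function.Injective x := by
  simp only [Function.Injective, ae_all_iff]
  intro i j
  by_cases hij : i = j
  · exact Filter.Eventually.of_forall fun _ _ => hij
  · exact measure_mono_null (fun x hx => (Classical.not_imp.1 hx).1)
      (measure_pi_setOf_apply_eq_apply μ hij)

end Diagonal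

section Chambers

variable {n : ℕ} {α : Type*} [LinearOrder α]

theorem exists_perm_antitone_comp (x : Fin n → α) :
    ∃ σ : Equiv.Perm (Fin n), Antitone (x ∘ σ) :=
  ⟨Tuple.sort (OrderDual.toDual ∘ x), Tuple.monotone_sort (OrderDual.toDual ∘ x)⟩

theorem Function.Injective.perm_eq_of_antitone_comp {x : Fin n → α} (hx : Function.Injective x)
    {σ τ : Equiv.Perm (Fin n)} (hσ : Antitone (x ∘ σ)) (hτ : Antitone (x ∘ τ)) : σ = τ :=
  Equiv.coe_fn_injective (hx.comp_left (Tuple.unique_antitone hσ hτ))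

end Chambers

theorem MeasurableEquiv.piCongrLeft_const_apply {ι ι' α : Type*} [MeasurableSpace α]
    (e : ι' ≃ ι) (x : ι' → α) : piCongrLeft (fun _ => α) e x = x ∘ e.symm := by
  ext i
  simp [piCongrLeft, Equiv.piCongrLeft, Equiv.piCongrLeft']

section OrderedSimplex

variable {n : ℕ} (μ : Measure ℝ) [SigmaFinite μ] {E : Type*} [NormedAddCommGroup E]
  [NormedSpace ℝ E] {g : (Fin n → ℝ) → E}

theorem measurableSet_setOf_antitone_comp (σ : Equiv.Perm (Fin n)) :
    MeasurableSet {x : Fin n → ℝ | Antitone (x ∘ σ)} := by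
  have h : {x : Fin n → ℝ | Antitone (x ∘ σ)}
      = MeasurableEquiv.piCongrLeft (fun _ => ℝ) σ.symm ⁻¹' {x | Antitone x} := by
    ext x
    simp [MeasurableEquiv.piCongrLeft_const_apply]
  rw [h]
  exact isClosed_antitone.measurableSet.preimage (MeasurableEquiv.measurable _)

theorem integral_pi_eq_sum_setIntegral_antitone_comp [NullSingletonClass μ]
    (hg : Integrable g (Measure.pi fun _ => μ)) :
    ∫ x, g x ∂(Measure.pi fun _ => μ)
      = ∑ σ : Equiv.Perm (Fin n), ∫ x in {x | Antitone (x ∘ σ)}, g x ∂(Measure.pi fun _ => μ) := by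
  have hcover : (⋃ σ : Equiv.Perm (Fin n), {x : Fin n → ℝ | Antitone (x ∘ σ)}) = Set.univ :=
    Set.eq_univ_of_forall fun x => Set.mem_iUnion.2 (exists_perm_antitone_comp x)
  have hdisj : Pairwise (Function.onFun (AEDisjoint (Measure.pi fun _ => μ))
      fun σ : Equiv.Perm (Fin n) => {x : Fin n → ℝ | Antitone (x ∘ σ)}) := by
    intro σ τ hστ
    exact measure_mono_null
      (fun x hx (hinj : Function.Injective x) => hστ (hinj.perm_eq_of_antitone_comp hx.1 hx.2))
      (ae_iff.1 (ae_injective_pi (ι := Fin n) μ))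
  rw [← setIntegral_univ, ← hcover, integral_iUnion_ae
    (fun σ => (measurableSet_setOf_antitone_comp σ).nullMeasurableSet) hdisj
    (by rw [hcover]; exact hg.integrableOn), tsum_fintype]

theorem setIntegral_antitone_comp_perm (σ : Equiv.Perm (Fin n)) :
    ∫ x in {x : Fin n → ℝ | Antitone x}, g (x ∘ σ) ∂(Measure.pi fun _ => μ)
      = ∫ x in {x | Antitone (x ∘ σ.symm)}, g x ∂(Measure.pi fun _ => μ) := by
  have := (measurePreserving_piCongrLeft (fun _ => μ) σ.symm).setIntegral_preimage_emb
    (MeasurableEquiv.measurableEmbedding _) g {x | Antitone (x ∘ σ.symm)}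
  rw [show MeasurableEquiv.piCongrLeft (fun _ => ℝ) σ.symm ⁻¹' {x | Antitone (x ∘ σ.symm)}
      = {x | Antitone x} by ext x; simp [MeasurableEquiv.piCongrLeft_const_apply,
        Function.comp_assoc]] at this
  simpa [MeasurableEquiv.piCongrLeft_const_apply] using this

theorem integral_pi_eq_setIntegral_antitone_sum_comp_perm [NullSingletonClass μ]
    (hg : Integrable g (Measure.pi fun _ => μ)) :
    ∫ x, g x ∂(Measure.pi fun _ => μ)
      = ∫ x in {x : Fin n → ℝ | Antitone x}, ∑ σ : Equiv.Perm (Fin n), g (x ∘ σ)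
          ∂(Measure.pi fun _ => μ) := by
  have hgσ (σ : Equiv.Perm (Fin n)) :
      Integrable (fun x => g (x ∘ σ)) (Measure.pi fun _ => μ) := by
    simpa [Function.comp_def, MeasurableEquiv.piCongrLeft_const_apply] using
      (measurePreserving_piCongrLeft (fun _ => μ) σ.symm).integrable_comp_of_integrable hg
  rw [integral_finsetSum _ fun σ _ => (hgσ σ).integrableOn,
    integral_pi_eq_sum_setIntegral_antitone_comp μ hg,
    ← Equiv.sum_comp (Equiv.inv (Equiv.Perm (Fin n)))]
  exact Finset.sum_congr rfl fun σ _ => (setIntegral_antitone_comp_perm μ σ).symm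

end OrderedSimplex

theorem andreief_identity_general
    (M : ℕ) (a b : EReal)
    (Ψ Φ : Fin M → ℝ → ℝ) (ξ : ℝ → ℝ)
    (S : Set ℝ) (hS : S = {x : ℝ | a < (x : EReal) ∧ (x : EReal) < b})
    (hint : ∀ i j, IntegrableOn (fun x => Ψ i x * Φ j x * ξ x) S)
    (D : Set (Fin M → ℝ))
    (hD : D = {x : Fin M → ℝ | (∀ m, x m ∈ S) ∧ Antitone x}) :
    (∫ x in D,
        Matrix.det (Matrix.of fun i j => Ψ i (x j)) *
        Matrix.det (Matrix.of fun i j => Φ i (x j)) * ∏ m, ξ (x m))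
    = Matrix.det (Matrix.of fun i j : Fin M => ∫ t in S, Ψ i t * Φ j t * ξ t) := by
  have hSm : MeasurableSet S := by
    rw [hS]
    exact (measurableSet_Ioi.preimage continuous_coe_real_ereal.measurable).inter
      (measurableSet_Iio.preimage continuous_coe_real_ereal.measurable)
  have hD_restrict : volume.restrict D
      = (Measure.pi fun _ : Fin M => volume.restrict S).restrict {x | Antitone x} := by
    rw [← Measure.restrict_pi_pi, ← volume_pi, Measure.restrict_restrict' (.univ_pi fun _ => hSm),
      hD, Set.inter_comm]
    congr 1
    ext x
    simp
  have hsymmetrize (x : Fin M → ℝ) : ∑ σ : Equiv.Perm (Fin M),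
      det (of fun i j => Ψ i ((x ∘ σ) j) * Φ j ((x ∘ σ) j) * ξ ((x ∘ σ) j))
      = det (of fun i j => Ψ i (x j)) * det (of fun i j => Φ i (x j)) * ∏ m, ξ (x m) := by
    simp only [Function.comp_apply, mul_assoc]
    rw [sum_perm_det_of_comp_perm_mul Ψ (fun j t => Φ j t * ξ t) x,
      mul_comm (det (of fun i j => Φ i (x j))), ← det_mul_row]
    congr 2
    ext i j
    simp [mul_comm]
  rw [hD_restrict, det_integral_eq_integral_det_of_apply hint,
    integral_pi_eq_setIntegral_antitone_sum_comp_perm _ (integrable_det_of_apply hint)]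
  simp_rw [hsymmetrize]

/-- The Chiani–Win–Zanella / Andréief integration identity: for measurable families
`Ψ_i, Φ_i` and a weight `ξ` on the interval `(a, b)` (with extended-real endpoints),
the integral of `det[Ψ_i(x_j)]·det[Φ_i(x_j)]·∏ ξ(x_m)` over the ordered domain
`b ≥ x_1 ≥ … ≥ x_M ≥ a` equals `det[∫_a^b Ψ_i(x) Φ_j(x) ξ(x) dx]`. -/
theorem andreief_identity
    (M : ℕ) (hM : 1 ≤ M) (a b : EReal) (hab : a < b)
    (Ψ Φ : Fin M → ℝ → ℝ) (ξ : ℝ → ℝ)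
    (S : Set ℝ) (hS : S = {x : ℝ | a < (x : EReal) ∧ (x : EReal) < b})
    (hΨ : ∀ i, Measurable (Ψ i)) (hΦ : ∀ i, Measurable (Φ i)) (hξ : Measurable ξ)
    (hint : ∀ i j, IntegrableOn (fun x => Ψ i x * Φ j x * ξ x) S)
    (D : Set (Fin M → ℝ))
    (hD : D = {x : Fin M → ℝ | (∀ m, x m ∈ S) ∧ Antitone x})
    (hiD : IntegrableOn (fun x : Fin M → ℝ =>
        Matrix.det (Matrix.of fun i j => Ψ i (x j)) *
        Matrix.det (Matrix.of fun i j => Φ i (x j)) * ∏ m, ξ (x m)) D) :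
    (∫ x in D,
        Matrix.det (Matrix.of fun i j => Ψ i (x j)) *
        Matrix.det (Matrix.of fun i j => Φ i (x j)) * ∏ m, ξ (x m))
    = Matrix.det (Matrix.of fun i j : Fin M => ∫ t in S, Ψ i t * Φ j t * ξ t) :=
  andreief_identity_general M a b Ψ Φ ξ S hS hint D hD
end

section
/- Let n_T ≥ n_R ≥ 1 and n_b ≥ 1 be integers, SNR > 0, and set γ = SNR/n_T. Define p : ℂ^{n_R×n_b} → ℝ by p(Y) = ∫_{ℂ^{n_R×n_T}} ∫_{ℂ^{n_T×n_b}} π^{−n_R n_b} exp(−‖Y − √γ·H X‖_F²) · π^{−n_T n_b} exp(−‖X‖_F²) · π^{−n_T n_R} exp(−‖H‖_F²) dX dH. Then for every unitary U ∈ U(n_R), every unitary V ∈ U(n_b), and every Y ∈ ℂ^{n_R×n_b}, one has p(U Y V) = p(Y). In particular, p(Y) depends only on the eigenvalues of Y Y†, and the phases of the entries of Y carry no information about the input. -/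
/-!
Substituting `H ↦ U H` and `X ↦ X V` leaves Lebesgue measure invariant: both maps are real-linear
and preserve the open Frobenius unit ball, so their Haar scaling factor `|det|⁻¹` is `1`. They
also preserve `‖H‖_F` and `‖X‖_F`, and `U Y V - c (U H) (X V) = U (Y - c H X) V` has the same
Frobenius norm as `Y - c H X`; hence the integrand defining `p (U Y V)` becomes the one
defining `p Y`.
-/

open MeasureTheory Matrix

namespace LinearEquiv

variable {E : Type*} [NormedAddCommGroup E] [NormedSpace ℝ E] [FiniteDimensional ℝ E]
  [MeasurableSpace E] [BorelSpace E] (μ : Measure E) [μ.IsAddHaarMeasure] (L : E ≃ₗ[ℝ] E)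
  {s : Set E}

theorem measurePreserving_of_preimage_eq (hs : IsOpen s) (hsb : Bornology.IsBounded s)
    (hne : s.Nonempty) (hLs : L ⁻¹' s = s) : MeasurePreserving L μ μ := by
  have hL : Continuous L := L.toLinearMap.continuous_of_finiteDimensional
  have hmap := Measure.map_linearMap_addHaar_eq_smul_addHaar μ L.isUnit_det'.ne_zero
  rw [coe_coe] at hmap
  have hscale : ENNReal.ofReal |(LinearMap.det (L : E →ₗ[ℝ] E))⁻¹| = 1 := by
    have h := congrArg (· s) hmap
    simp only [Measure.map_apply hL.measurable hs.measurableSet, hLs, Measure.smul_apply,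
      smul_eq_mul] at h
    exact (ENNReal.mul_eq_right (hs.measure_pos μ hne).ne' hsb.measure_lt_top.ne).1 h.symm
  exact ⟨hL.measurable, by rw [hmap, hscale, one_smul]⟩

theorem integral_comp_of_preimage_eq {F : Type*} [NormedAddCommGroup F] [NormedSpace ℝ F]
    (hs : IsOpen s) (hsb : Bornology.IsBounded s) (hne : s.Nonempty) (hLs : L ⁻¹' s = s)
    (g : E → F) : ∫ x, g (L x) ∂μ = ∫ x, g x ∂μ :=
  (L.measurePreserving_of_preimage_eq μ hs hsb hne hLs).integral_comp
    L.toContinuousLinearEquiv.toHomeomorph.measurableEmbedding g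

end LinearEquiv

namespace Matrix

variable {m n 𝕜 : Type*} [Fintype m] [Fintype n]

section LinearEquiv

variable {α : Type*} [CommRing α] [StarRing α] (R : Type*) [Semiring R] [Module R α]

variable (n) in
def unitaryMulLinearEquiv [DecidableEq m] [SMulCommClass R α α] (U : unitaryGroup m α) :
    Matrix m n α ≃ₗ[R] Matrix m n α :=
  .ofLinearMap (f := mulLeftLinearMap n R U.1) (g := mulLeftLinearMap n R (star U.1))
    (LinearMap.ext fun A => by simp [← Matrix.mul_assoc, Unitary.mul_star_self_of_mem U.2])
    (LinearMap.ext fun A => by simp [← Matrix.mul_assoc, Unitary.star_mul_self_of_mem U.2])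

variable (m) in
def mulUnitaryLinearEquiv [DecidableEq n] [IsScalarTower R α α] (V : unitaryGroup n α) :
    Matrix m n α ≃ₗ[R] Matrix m n α :=
  .ofLinearMap (f := mulRightLinearMap m R V.1) (g := mulRightLinearMap m R (star V.1))
    (LinearMap.ext fun A => by simp [Matrix.mul_assoc, Unitary.star_mul_self_of_mem V.2])
    (LinearMap.ext fun A => by simp [Matrix.mul_assoc, Unitary.mul_star_self_of_mem V.2])

end LinearEquiv

theorem norm_sq_le_sum_sum_norm_sq [SeminormedAddCommGroup 𝕜] (A : Matrix m n 𝕜) (i : m)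
    (j : n) : ‖A i j‖ ^ 2 ≤ ∑ i, ∑ j, ‖A i j‖ ^ 2 :=
  (Finset.single_le_sum (f := fun j => ‖A i j‖ ^ 2) (fun _ _ => by positivity)
    (Finset.mem_univ j)).trans
  (Finset.single_le_sum (f := fun i => ∑ j, ‖A i j‖ ^ 2) (fun _ _ => by positivity)
    (Finset.mem_univ i))

variable [RCLike 𝕜]

theorem re_trace_mul_conjTranspose_self (A : Matrix m n 𝕜) :
    RCLike.re (A * Aᴴ).trace = ∑ i, ∑ j, ‖A i j‖ ^ 2 := by
  simp only [trace, diag_apply, mul_apply, conjTranspose_apply, RCLike.star_def,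
    RCLike.mul_conj, map_sum]
  norm_cast

theorem sum_norm_sq_unitary_mul [DecidableEq m] (U : unitaryGroup m 𝕜) (A : Matrix m n 𝕜) :
    ∑ i, ∑ j, ‖(U.1 * A) i j‖ ^ 2 = ∑ i, ∑ j, ‖A i j‖ ^ 2 := by
  rw [← re_trace_mul_conjTranspose_self, ← re_trace_mul_conjTranspose_self, conjTranspose_mul,
    Matrix.mul_assoc, trace_mul_comm, Matrix.mul_assoc, Matrix.mul_assoc Aᴴ,
    ← star_eq_conjTranspose, Unitary.star_mul_self_of_mem U.2, Matrix.mul_one]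

theorem sum_norm_sq_mul_unitary [DecidableEq n] (V : unitaryGroup n 𝕜) (A : Matrix m n 𝕜) :
    ∑ i, ∑ j, ‖(A * V.1) i j‖ ^ 2 = ∑ i, ∑ j, ‖A i j‖ ^ 2 := by
  rw [← re_trace_mul_conjTranspose_self, ← re_trace_mul_conjTranspose_self, conjTranspose_mul,
    Matrix.mul_assoc, ← Matrix.mul_assoc V.1, ← star_eq_conjTranspose,
    Unitary.mul_star_self_of_mem V.2, Matrix.one_mul]

end Matrix

section

variable {m n F : Type*} [Fintype m] [Fintype n] [NormedAddCommGroup F] [NormedSpace ℝ F]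

theorem integral_comp_of_sum_norm_sq_eq (L : (m → n → ℂ) ≃ₗ[ℝ] (m → n → ℂ))
    (hL : ∀ A, ∑ i, ∑ j, ‖L A i j‖ ^ 2 = ∑ i, ∑ j, ‖A i j‖ ^ 2) (g : (m → n → ℂ) → F) :
    ∫ A, g (L A) = ∫ A, g A := by
  have : (volume : Measure (m → n → ℂ)).IsAddHaarMeasure := Measure.pi.isAddHaarMeasure _
  refine L.integral_comp_of_preimage_eq volume (s := {A | ∑ i, ∑ j, ‖A i j‖ ^ 2 < 1})
    (isOpen_lt (by fun_prop) continuous_const) ?_ ⟨0, by simp⟩ (by ext A; simp [hL]) g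
  refine (Metric.isBounded_closedBall (x := 0) (r := 1)).subset fun A hA => ?_
  simp only [Metric.mem_closedBall, dist_zero_right, pi_norm_le_iff_of_nonneg zero_le_one]
  exact fun i j => (sq_le_one_iff₀ (norm_nonneg _)).1
    ((norm_sq_le_sum_sum_norm_sq (of A) i j).trans hA.le)

theorem integral_comp_unitary_mul [DecidableEq m] (U : unitaryGroup m ℂ)
    (g : (m → n → ℂ) → F) : ∫ A, g (of.symm (U.1 * of A)) = ∫ A, g A :=
  integral_comp_of_sum_norm_sq_eq (unitaryMulLinearEquiv n ℝ U)
    (fun A => sum_norm_sq_unitary_mul U (of A)) g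

theorem integral_comp_mul_unitary [DecidableEq n] (V : unitaryGroup n ℂ)
    (g : (m → n → ℂ) → F) : ∫ A, g (of.symm (of A * V.1)) = ∫ A, g A :=
  integral_comp_of_sum_norm_sq_eq (mulUnitaryLinearEquiv m ℝ V)
    (fun A => sum_norm_sq_mul_unitary V (of A)) g

theorem apply_unitary_mul_mul_unitary_of_eq_integral {k : Type*} [Fintype k] [DecidableEq m]
    [DecidableEq n] (U : unitaryGroup m ℂ) (V : unitaryGroup n ℂ) (p : Matrix m n ℂ → F)
    (f : Matrix m n ℂ → (m → k → ℂ) → (k → n → ℂ) → F) (hp : ∀ Y, p Y = ∫ H, ∫ X, f Y H X)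
    (hf : ∀ Y H X, f (U.1 * Y * V.1) (of.symm (U.1 * of H)) (of.symm (of X * V.1)) = f Y H X)
    (Y : Matrix m n ℂ) :
    p (U.1 * Y * V.1) = p Y := by
  rw [hp, hp]
  calc ∫ H, ∫ X, f (U.1 * Y * V.1) H X
      = ∫ H : m → k → ℂ, ∫ X : k → n → ℂ,
          f (U.1 * Y * V.1) (of.symm (U.1 * of H)) (of.symm (of X * V.1)) := by
        rw [← integral_comp_unitary_mul U]
        exact integral_congr_ae (ae_of_all _ fun H => (integral_comp_mul_unitary V _).symm)
    _ = ∫ H, ∫ X, f Y H X := by simp only [hf]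

end

theorem output_density_unitary_invariant_general
    (nT nR nb : ℕ) (SNR : ℝ)
    (p : Matrix (Fin nR) (Fin nb) ℂ → ℝ)
    (hp : ∀ Y, p Y = ∫ H : Fin nR → Fin nT → ℂ, ∫ X : Fin nT → Fin nb → ℂ,
        (Real.pi ^ (nR * nb))⁻¹ *
          Real.exp (-∑ i, ∑ j,
            ‖(Y - (Real.sqrt (SNR / nT) : ℂ) • (Matrix.of H * Matrix.of X)) i j‖ ^ 2) *
        ((Real.pi ^ (nT * nb))⁻¹ * Real.exp (-∑ i, ∑ j, ‖X i j‖ ^ 2)) *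
        ((Real.pi ^ (nT * nR))⁻¹ * Real.exp (-∑ i, ∑ j, ‖H i j‖ ^ 2))) :
    ∀ (U : Matrix.unitaryGroup (Fin nR) ℂ) (V : Matrix.unitaryGroup (Fin nb) ℂ)
      (Y : Matrix (Fin nR) (Fin nb) ℂ),
      p ((U : Matrix (Fin nR) (Fin nR) ℂ) * Y * (V : Matrix (Fin nb) (Fin nb) ℂ)) = p Y := by
  intro U V Y
  refine apply_unitary_mul_mul_unitary_of_eq_integral U V p _ hp (fun Z H X => ?_) Y
  have hsub : U.1 * Z * V.1 - (Real.sqrt (SNR / nT) : ℂ) • (U.1 * of H * (of X * V.1)) =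
      U.1 * (Z - (Real.sqrt (SNR / nT) : ℂ) • (of H * of X)) * V.1 := by
    simp only [Matrix.mul_sub, Matrix.sub_mul, Matrix.mul_smul, Matrix.smul_mul,
      Matrix.mul_assoc]
  simp only [Equiv.apply_symm_apply, of_symm_apply, of_apply, hsub, sum_norm_sq_unitary_mul,
    sum_norm_sq_mul_unitary]

/-- Unitary invariance of the unconditional output density of the block Rayleigh-faded
channel with IID complex Gaussian input: `p(UYV) = p(Y)` for all unitary `U, V`; hence
`p(Y)` depends only on the eigenvalues of `Y Y†` and the phases of the entries of `Y`
carry no information about the input. -/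
theorem output_density_unitary_invariant
    (nT nR nb : ℕ) (hR : 1 ≤ nR) (hTR : nR ≤ nT) (hb : 1 ≤ nb)
    (SNR : ℝ) (hSNR : 0 < SNR)
    (p : Matrix (Fin nR) (Fin nb) ℂ → ℝ)
    (hp : ∀ Y, p Y = ∫ H : Fin nR → Fin nT → ℂ, ∫ X : Fin nT → Fin nb → ℂ,
        (Real.pi ^ (nR * nb))⁻¹ *
          Real.exp (-∑ i, ∑ j,
            ‖(Y - (Real.sqrt (SNR / nT) : ℂ) • (Matrix.of H * Matrix.of X)) i j‖ ^ 2) *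
        ((Real.pi ^ (nT * nb))⁻¹ * Real.exp (-∑ i, ∑ j, ‖X i j‖ ^ 2)) *
        ((Real.pi ^ (nT * nR))⁻¹ * Real.exp (-∑ i, ∑ j, ‖H i j‖ ^ 2))) :
    ∀ (U : Matrix.unitaryGroup (Fin nR) ℂ) (V : Matrix.unitaryGroup (Fin nb) ℂ)
      (Y : Matrix (Fin nR) (Fin nb) ℂ),
      p ((U : Matrix (Fin nR) (Fin nR) ℂ) * Y * (V : Matrix (Fin nb) (Fin nb) ℂ)) = p Y :=
  output_density_unitary_invariant_general nT nR nb SNR p hp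
end

section
/- Let n_b ≥ 1 be an integer and SNR > 0. For every y ∈ ℂ^{n_b}, ∫_{ℂ} ∫_{ℂ^{n_b}} π^{−n_b} exp( −‖y − √SNR·h x‖² ) · π^{−n_b} exp( −‖x‖² ) · π^{−1} exp( −|h|² ) dx dh = ( e^{−‖y‖²} / π^{n_b} ) · ∫_0^∞ exp( ‖y‖²·SNR·z/(SNR·z + 1) − z ) · (SNR·z + 1)^{−n_b} dz. That is, the unconditional output density of the scalar (n_T = n_R = 1) block Rayleigh-faded channel of coherence length n_b with IID complex Gaussian input admits this one-dimensional integral representation. -/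
/-!
Completing the square in each coordinate,
`‖c - a x‖² + ‖x‖² = (1 + ‖a‖²)‖x - w‖² + ‖c‖²/(1 + ‖a‖²)` with `w = ā c/(1 + ‖a‖²)`,
turns the inner integral over the input block into a product of shifted complex Gaussian
integrals, `(π / (1 + SNR‖h‖²))^n_b · exp(-‖y‖²/(1 + SNR‖h‖²))`. This depends on `h` only
through `‖h‖²`, and for a radial function on `ℂ` the substitution `z = ‖h‖²` gives
`∫ g(‖h‖²) dh = π ∫₀^∞ g(z) dz`.
-/

open MeasureTheory Real

theorem Complex.integral_exp_neg_mul_norm_sq {s : ℝ} (hs : 0 < s) :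
    ∫ x : ℂ, rexp (-s * ‖x‖ ^ 2) = π / s := by
  simpa [Real.rpow_neg_one, div_eq_mul_inv, one_add_one_eq_two] using
    Complex.integral_exp_neg_mul_rpow one_le_two hs

theorem Complex.integral_exp_neg_mul_norm_sub_sq {s : ℝ} (hs : 0 < s) (w : ℂ) :
    ∫ x : ℂ, rexp (-s * ‖x - w‖ ^ 2) = π / s :=
  (integral_sub_right_eq_self (fun x : ℂ => rexp (-s * ‖x‖ ^ 2)) w).trans
    (Complex.integral_exp_neg_mul_norm_sq hs)

theorem Complex.norm_sub_mul_sq_add_norm_sq (a c x : ℂ) :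
    ‖c - a * x‖ ^ 2 + ‖x‖ ^ 2 =
      (1 + ‖a‖ ^ 2) * ‖x - starRingEnd ℂ a * c / (1 + ‖a‖ ^ 2 : ℝ)‖ ^ 2
        + ‖c‖ ^ 2 / (1 + ‖a‖ ^ 2) := by
  have hs : 0 < 1 + a.re * a.re + a.im * a.im := by
    nlinarith [mul_self_nonneg a.re, mul_self_nonneg a.im]
  simp only [Complex.sq_norm, Complex.normSq_apply, Complex.sub_re, Complex.sub_im,
    Complex.mul_re, Complex.mul_im, Complex.conj_re, Complex.conj_im, Complex.div_ofReal_re,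
    Complex.div_ofReal_im, ← add_assoc]
  field_simp
  ring

theorem Complex.integral_exp_neg_norm_sub_mul_sq_mul_exp_neg_norm_sq (a c : ℂ) :
    ∫ x : ℂ, rexp (-‖c - a * x‖ ^ 2) * rexp (-‖x‖ ^ 2) =
      π / (1 + ‖a‖ ^ 2) * rexp (-‖c‖ ^ 2 / (1 + ‖a‖ ^ 2)) := by
  simp_rw [← Real.exp_add, ← neg_add, Complex.norm_sub_mul_sq_add_norm_sq a c, neg_add,
    Real.exp_add, ← neg_mul, neg_div]
  rw [integral_mul_const, Complex.integral_exp_neg_mul_norm_sub_sq (by positivity)]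

theorem integral_exp_neg_sum_norm_sub_mul_sq_mul_exp_neg_sum_norm_sq {ι : Type*} [Fintype ι]
    (a : ℂ) (y : ι → ℂ) :
    ∫ x : ι → ℂ, rexp (-∑ i, ‖y i - a * x i‖ ^ 2) * rexp (-∑ i, ‖x i‖ ^ 2) =
      (π / (1 + ‖a‖ ^ 2)) ^ Fintype.card ι * rexp (-(∑ i, ‖y i‖ ^ 2) / (1 + ‖a‖ ^ 2)) := by
  simp_rw [← Finset.sum_neg_distrib, Real.exp_sum, ← Finset.prod_mul_distrib]
  rw [integral_fintype_prod_volume_eq_prod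
    (fun i x => rexp (-‖y i - a * x‖ ^ 2) * rexp (-‖x‖ ^ 2))]
  simp_rw [Complex.integral_exp_neg_norm_sub_mul_sq_mul_exp_neg_norm_sq]
  rw [Finset.prod_mul_distrib, Finset.prod_const, Finset.card_univ, Finset.sum_div, Real.exp_sum]

theorem Complex.integral_comp_norm_sq {E : Type*} [NormedAddCommGroup E] [NormedSpace ℝ E]
    (g : ℝ → E) : ∫ w : ℂ, g (‖w‖ ^ 2) = π • ∫ z in Set.Ioi (0 : ℝ), g z := by
  have hball : volume.real (Metric.ball (0 : ℂ) 1) = π := by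
    simp [measureReal_def, Complex.volume_ball]
  rw [integral_fun_norm_addHaar volume (fun r => g (r ^ 2)), Complex.finrank_real_complex, hball,
    ← integral_comp_rpow_Ioi_of_pos (g := g) two_pos, ← integral_smul, ← integral_smul,
    ← Nat.cast_smul_eq_nsmul ℝ, ← integral_smul]
  refine setIntegral_congr_fun measurableSet_Ioi fun r _ => ?_
  have hpow : r ^ ((2 : ℝ) - 1) = r := by norm_num
  rw [hpow, Real.rpow_two, smul_smul, smul_smul, smul_smul]
  congr 1
  norm_num
  ring

theorem scalar_output_density_general
    (nb : ℕ) (SNR : ℝ) (hSNR : 0 < SNR) (y : Fin nb → ℂ) :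
    (∫ h : ℂ, ∫ x : Fin nb → ℂ,
        (Real.pi ^ nb)⁻¹ * Real.exp (-∑ i, ‖y i - (Real.sqrt SNR : ℂ) * h * x i‖ ^ 2) *
        ((Real.pi ^ nb)⁻¹ * Real.exp (-∑ i, ‖x i‖ ^ 2)) *
        (Real.pi⁻¹ * Real.exp (-‖h‖ ^ 2)))
    = (Real.exp (-∑ i, ‖y i‖ ^ 2) / Real.pi ^ nb) *
        ∫ z in Set.Ioi (0 : ℝ),
          Real.exp ((∑ i, ‖y i‖ ^ 2) * (SNR * z) / (SNR * z + 1) - z) *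
            ((SNR * z + 1) ^ nb)⁻¹ := by
  set Y := ∑ i, ‖y i‖ ^ 2 with hY
  have inner (h : ℂ) :
      ∫ x : Fin nb → ℂ,
        (π ^ nb)⁻¹ * rexp (-∑ i, ‖y i - (√SNR : ℂ) * h * x i‖ ^ 2) *
          ((π ^ nb)⁻¹ * rexp (-∑ i, ‖x i‖ ^ 2)) * (π⁻¹ * rexp (-‖h‖ ^ 2))
      = (π ^ nb)⁻¹ * π⁻¹ * (rexp (-‖h‖ ^ 2) * rexp (-Y / (SNR * ‖h‖ ^ 2 + 1)) *
          ((SNR * ‖h‖ ^ 2 + 1) ^ nb)⁻¹) := by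
    have hnorm : ‖(√SNR : ℂ) * h‖ ^ 2 = SNR * ‖h‖ ^ 2 := by
      rw [norm_mul, mul_pow, Complex.norm_real, Real.norm_eq_abs, sq_abs, Real.sq_sqrt hSNR.le]
    simp_rw [show ∀ a b c d : ℝ, a * b * (a * c) * d = a * a * d * (b * c) from
      fun _ _ _ _ => by ring]
    rw [integral_const_mul, integral_exp_neg_sum_norm_sub_mul_sq_mul_exp_neg_sum_norm_sq, hnorm,
      Fintype.card_fin, ← hY, add_comm 1, div_pow]
    field_simp
  have exp_identity (z : ℝ) (hz : 0 < z) :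
      rexp (-z) * rexp (-Y / (SNR * z + 1)) * ((SNR * z + 1) ^ nb)⁻¹ =
        rexp (-Y) * (rexp (Y * (SNR * z) / (SNR * z + 1) - z) * ((SNR * z + 1) ^ nb)⁻¹) := by
    have hd : SNR * z + 1 ≠ 0 := by positivity
    rw [← Real.exp_add, ← mul_assoc, ← Real.exp_add]
    congr 2
    linear_combination (-Y) * div_self hd
  simp_rw [inner]
  rw [integral_const_mul, Complex.integral_comp_norm_sq
    (fun z => rexp (-z) * rexp (-Y / (SNR * z + 1)) * ((SNR * z + 1) ^ nb)⁻¹),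
    setIntegral_congr_fun measurableSet_Ioi exp_identity, integral_const_mul, smul_eq_mul]
  field_simp

/-- Specialization of Proposition 2 to a single transmit and a single receive antenna:
the unconditional output density of the scalar block Rayleigh-faded channel of coherence
length `n_b` with IID complex Gaussian input admits a one-dimensional integral
representation. -/
theorem scalar_output_density
    (nb : ℕ) (hb : 1 ≤ nb) (SNR : ℝ) (hSNR : 0 < SNR) (y : Fin nb → ℂ) :
    (∫ h : ℂ, ∫ x : Fin nb → ℂ,
        (Real.pi ^ nb)⁻¹ * Real.exp (-∑ i, ‖y i - (Real.sqrt SNR : ℂ) * h * x i‖ ^ 2) *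
        ((Real.pi ^ nb)⁻¹ * Real.exp (-∑ i, ‖x i‖ ^ 2)) *
        (Real.pi⁻¹ * Real.exp (-‖h‖ ^ 2)))
    = (Real.exp (-∑ i, ‖y i‖ ^ 2) / Real.pi ^ nb) *
        ∫ z in Set.Ioi (0 : ℝ),
          Real.exp ((∑ i, ‖y i‖ ^ 2) * (SNR * z) / (SNR * z + 1) - z) *
            ((SNR * z + 1) ^ nb)⁻¹ :=
  scalar_output_density_general nb SNR hSNR y
end
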